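/- For finite alphabets, any joint pmf P on (X^n, Y^n), and any test distribution T on Y^n, the directed information satisfies I(X^n → Y^n) ≤ max_{x^n ∈ support} D(P_{Y^n‖X^n = x^n} ‖ T_{Y^n}), where the maximum is over sequences x^n generated by deterministic causal feedback functions f_i: X^{i−1} × Y^{i−1} → X. -/

import Mathlib

open scoped Classical

namespace Stmt2

variable {X Y : Type}

/-- `marg n P a b x y` is the marginal probability `P(x^a, y^b)`. -/
noncomputable def marg (n : ℕ) [Fintype X] [Fintype Y]
    (P : (Fin n → X) × (Fin n → Y) → ℝ) (a b : ℕ)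
    (x : Fin n → X) (y : Fin n → Y) : ℝ :=
  ∑ x' : Fin n → X, ∑ y' : Fin n → Y,
    if (∀ j : Fin n, (j : ℕ) < a → x' j = x j) ∧ (∀ j : Fin n, (j : ℕ) < b → y' j = y j)
      then P (x', y') else 0

/-- Directed information `I(X^n → Y^n) = ∑_{i=1}^n I(X^i; Y_i | Y^{i-1})`. -/
noncomputable def directedInfo (n : ℕ) [Fintype X] [Fintype Y]
    (P : (Fin n → X) × (Fin n → Y) → ℝ) : ℝ :=
  ∑ i ∈ Finset.range n, ∑ x : Fin n → X, ∑ y : Fin n → Y,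
    P (x, y) * Real.logb 2
      ((marg n P (i + 1) (i + 1) x y * marg n P 0 i x y) /
        (marg n P (i + 1) i x y * marg n P 0 (i + 1) x y))

/-- Causal conditioning `P(y^n ‖ x^n) = ∏_{i=1}^n P(y_i | y^{i-1}, x^i)`. -/
noncomputable def causalY (n : ℕ) [Fintype X] [Fintype Y]
    (P : (Fin n → X) × (Fin n → Y) → ℝ) (x : Fin n → X) (y : Fin n → Y) : ℝ :=
  ∏ i ∈ Finset.range n, marg n P (i + 1) (i + 1) x y / marg n P (i + 1) i x y

/-- A deterministic causal feedback strategy: the `i`-th input depends only on the previous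
outputs `y^{i-1}` (the previous inputs being themselves recursively determined by them).
This is exactly the set of input sequences generated by deterministic functions
`f_i : X^{i-1} × Y^{i-1} → X`. -/
def CausalStrategy (n : ℕ) (σ : (Fin n → Y) → Fin n → X) : Prop :=
  ∀ y y' : Fin n → Y, ∀ i : Fin n, (∀ j : Fin n, j < i → y j = y' j) → σ y i = σ y' i

section Basic

variable (n : ℕ) [Fintype X] [Fintype Y] (P : (Fin n → X) × (Fin n → Y) → ℝ)

lemma marg_nonneg (hP0 : ∀ p, 0 ≤ P p) (a b : ℕ) (x : Fin n → X) (y : Fin n → Y) :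
    0 ≤ marg n P a b x y := by
  refine Finset.sum_nonneg fun x' _ => Finset.sum_nonneg fun y' _ => ?_
  split
  · exact hP0 _
  · exact le_rfl

lemma marg_anti (hP0 : ∀ p, 0 ≤ P p) {a b a' b' : ℕ} (ha : a ≤ a') (hb : b ≤ b')
    (x : Fin n → X) (y : Fin n → Y) :
    marg n P a' b' x y ≤ marg n P a b x y := by
  refine Finset.sum_le_sum fun x' _ => Finset.sum_le_sum fun y' _ => ?_
  split_ifs with h1 h2 h2
  · exact le_rfl
  · exact absurd ⟨fun j hj => h1.1 j (lt_of_lt_of_le hj ha),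
      fun j hj => h1.2 j (lt_of_lt_of_le hj hb)⟩ h2
  · exact hP0 _
  · exact le_rfl

lemma marg_congr {a b : ℕ} {x x' : Fin n → X} {y y' : Fin n → Y}
    (hx : ∀ j : Fin n, (j : ℕ) < a → x j = x' j)
    (hy : ∀ j : Fin n, (j : ℕ) < b → y j = y' j) :
    marg n P a b x y = marg n P a b x' y' := by
  refine Finset.sum_congr rfl fun x'' _ => Finset.sum_congr rfl fun y'' _ => ?_
  refine if_congr (and_congr ?_ ?_) rfl rfl
  · exact forall_congr' fun j => imp_congr_right fun hj => by rw [hx j hj]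
  · exact forall_congr' fun j => imp_congr_right fun hj => by rw [hy j hj]

lemma marg_nn (x : Fin n → X) (y : Fin n → Y) : marg n P n n x y = P (x, y) := by
  unfold marg
  have h : ∀ (x' : Fin n → X) (y' : Fin n → Y),
      ((∀ j : Fin n, (j : ℕ) < n → x' j = x j) ∧ (∀ j : Fin n, (j : ℕ) < n → y' j = y j))
        ↔ (x' = x ∧ y' = y) := by
    intro x' y'
    constructor
    · rintro ⟨h1, h2⟩
      exact ⟨funext fun j => h1 j j.isLt, funext fun j => h2 j j.isLt⟩
    · rintro ⟨rfl, rfl⟩; exact ⟨fun _ _ => rfl, fun _ _ => rfl⟩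
  simp only [h]
  rw [Finset.sum_eq_single x]
  · rw [Finset.sum_eq_single y]
    · simp
    · intro b _ hb; simp [hb]
    · intro h; exact absurd (Finset.mem_univ y) h
  · intro b _ hb; simp [hb]
  · intro h; exact absurd (Finset.mem_univ x) h

lemma marg_00 (hP1 : ∑ p : (Fin n → X) × (Fin n → Y), P p = 1) (x : Fin n → X) (y : Fin n → Y) :
    marg n P 0 0 x y = 1 := by
  unfold marg
  simp only [Nat.not_lt_zero, false_implies, implies_true, and_self, if_true]
  rw [← Fintype.sum_prod_type] at *
  exact hP1

lemma marg_0n (x : Fin n → X) (y : Fin n → Y) :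
    marg n P 0 n x y = ∑ x' : Fin n → X, P (x', y) := by
  unfold marg
  have h : ∀ (y' : Fin n → Y), (∀ j : Fin n, (j : ℕ) < n → y' j = y j) ↔ y' = y := by
    intro y'
    exact ⟨fun h => funext fun j => h j j.isLt, fun h j _ => by rw [h]⟩
  refine Finset.sum_congr rfl fun x' _ => ?_
  simp only [Nat.not_lt_zero, false_implies, implies_true, true_and, h]
  rw [Finset.sum_eq_single y]
  · simp
  · intro b _ hb; simp [hb]
  · intro h; exact absurd (Finset.mem_univ y) h

lemma marg_sum_update (i : Fin n) (b : ℕ) (x : Fin n → X) (y : Fin n → Y) :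
    ∑ a : X, marg n P ((i : ℕ) + 1) b (Function.update x i a) y = marg n P i b x y := by
  unfold marg
  rw [Finset.sum_comm]
  refine Finset.sum_congr rfl fun x' _ => ?_
  rw [Finset.sum_comm]
  refine Finset.sum_congr rfl fun y' _ => ?_
  have key : ∀ a : X,
      ((∀ j : Fin n, (j : ℕ) < (i : ℕ) + 1 → x' j = Function.update x i a j) ∧
        (∀ j : Fin n, (j : ℕ) < b → y' j = y j))
      ↔ (x' i = a ∧ ((∀ j : Fin n, (j : ℕ) < (i : ℕ) → x' j = x j) ∧
          (∀ j : Fin n, (j : ℕ) < b → y' j = y j))) := by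
    intro a
    constructor
    · rintro ⟨h1, h2⟩
      have hi : x' i = a := by
        have := h1 i (Nat.lt_succ_self _)
        rwa [Function.update_self] at this
      refine ⟨hi, fun j hj => ?_, h2⟩
      have hne : j ≠ i := fun h => absurd (h ▸ hj) (lt_irrefl _)
      have := h1 j (Nat.lt_succ_of_lt hj)
      rwa [Function.update_of_ne hne] at this
    · rintro ⟨hi, h1, h2⟩
      refine ⟨fun j hj => ?_, h2⟩
      rcases Nat.lt_succ_iff_lt_or_eq.mp hj with hj' | hj'
      · have hne : j ≠ i := fun h => absurd (h ▸ hj') (lt_irrefl _)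
        rw [Function.update_of_ne hne]; exact h1 j hj'
      · have hji : j = i := Fin.ext hj'
        subst hji; rw [Function.update_self]; exact hi
  simp only [key, ite_and]
  rw [Finset.sum_ite_eq]
  simp

end Basic

noncomputable def q (n : ℕ) [Fintype X] [Fintype Y]
    (P : (Fin n → X) × (Fin n → Y) → ℝ) (x₀ : X) (i : Fin n)
    (x : Fin n → X) (y : Fin n → Y) : ℝ :=
  if marg n P i i x y = 0 then (if x i = x₀ then 1 else 0)
  else marg n P ((i : ℕ) + 1) i x y / marg n P i i x y

section QLemmas

variable (n : ℕ) [Fintype X] [Fintype Y] (P : (Fin n → X) × (Fin n → Y) → ℝ) (x₀ : X)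

lemma q_nonneg (hP0 : ∀ p, 0 ≤ P p) (i : Fin n) (x : Fin n → X) (y : Fin n → Y) :
    0 ≤ q n P x₀ i x y := by
  unfold q
  split_ifs with h1 h2
  · exact zero_le_one
  · exact le_rfl
  · exact div_nonneg (marg_nonneg n P hP0 _ _ _ _) (marg_nonneg n P hP0 _ _ _ _)

lemma q_congr {i : Fin n} {x x' : Fin n → X} {y y' : Fin n → Y}
    (hx : ∀ j : Fin n, (j : ℕ) < (i : ℕ) + 1 → x j = x' j)
    (hy : ∀ j : Fin n, (j : ℕ) < (i : ℕ) → y j = y' j) :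
    q n P x₀ i x y = q n P x₀ i x' y' := by
  have hxi : ∀ j : Fin n, (j : ℕ) < (i : ℕ) → x j = x' j :=
    fun j hj => hx j (Nat.lt_succ_of_lt hj)
  have h1 : marg n P i i x y = marg n P i i x' y' := marg_congr n P hxi hy
  have h2 : marg n P ((i : ℕ) + 1) i x y = marg n P ((i : ℕ) + 1) i x' y' :=
    marg_congr n P hx hy
  have h3 : x i = x' i := hx i (Nat.lt_succ_self _)
  unfold q
  rw [h1, h2, h3]

lemma q_sum (i : Fin n) (x : Fin n → X) (y : Fin n → Y) :
    ∑ a : X, q n P x₀ i (Function.update x i a) y = 1 := by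
  have hm : ∀ a : X, marg n P i i (Function.update x i a) y = marg n P i i x y := by
    intro a
    refine marg_congr n P (fun j hj => ?_) (fun j _ => rfl)
    exact Function.update_of_ne (fun (h : j = i) => absurd hj (by rw [h]; exact lt_irrefl _)) a x
  by_cases h : marg n P i i x y = 0
  · have : ∀ a : X, q n P x₀ i (Function.update x i a) y = if a = x₀ then 1 else 0 := by
      intro a
      unfold q
      rw [hm a, if_pos h, Function.update_self]
    simp only [this]
    rw [Finset.sum_ite_eq' Finset.univ x₀ (fun _ => (1:ℝ))]
    simp
  · have : ∀ a : X, q n P x₀ i (Function.update x i a) y =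
        marg n P ((i : ℕ) + 1) i (Function.update x i a) y / marg n P i i x y := by
      intro a
      unfold q
      rw [hm a, if_neg h]
    simp only [this]
    rw [← Finset.sum_div, marg_sum_update, div_self h]

lemma prod_q_mul_causalY (hP0 : ∀ p, 0 ≤ P p)
    (hP1 : ∑ p : (Fin n → X) × (Fin n → Y), P p = 1) (x : Fin n → X) (y : Fin n → Y) :
    (∏ i : Fin n, q n P x₀ i x y) * causalY n P x y = P (x, y) := by
  set F : ℕ → ℝ := fun i =>
    (if h : i < n then q n P x₀ ⟨i, h⟩ x y else 1) *
      (marg n P (i + 1) (i + 1) x y / marg n P (i + 1) i x y) with hF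
  have claim : ∀ k, k ≤ n → ∏ i ∈ Finset.range k, F i = marg n P k k x y := by
    intro k hk
    induction k with
    | zero => simpa using (marg_00 n P hP1 x y).symm
    | succ k ih =>
      have hkn : k < n := lt_of_lt_of_le (Nat.lt_succ_self k) hk
      rw [Finset.prod_range_succ, ih (le_of_lt hkn)]
      have hF' : F k = (if marg n P k k x y = 0 then (if x ⟨k, hkn⟩ = x₀ then 1 else 0)
          else marg n P (k + 1) k x y / marg n P k k x y) *
          (marg n P (k + 1) (k + 1) x y / marg n P (k + 1) k x y) := by
        rw [hF]; simp only [dif_pos hkn]; rfl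
      by_cases h1 : marg n P k k x y = 0
      · rw [h1, zero_mul]
        have : marg n P (k+1) (k+1) x y ≤ 0 := by
          calc marg n P (k+1) (k+1) x y ≤ marg n P k k x y :=
                marg_anti n P hP0 (Nat.le_succ k) (Nat.le_succ k) x y
            _ = 0 := h1
        exact (le_antisymm this (marg_nonneg n P hP0 _ _ _ _)).symm
      · by_cases h2 : marg n P (k+1) k x y = 0
        · rw [hF', if_neg h1, h2, zero_div, zero_mul, mul_zero]
          have : marg n P (k+1) (k+1) x y ≤ 0 := by
            calc marg n P (k+1) (k+1) x y ≤ marg n P (k+1) k x y :=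
                  marg_anti n P hP0 (le_refl _) (Nat.le_succ k) x y
              _ = 0 := h2
          exact (le_antisymm this (marg_nonneg n P hP0 _ _ _ _)).symm
        · rw [hF', if_neg h1]
          field_simp
  have hn := claim n (le_refl n)
  rw [marg_nn] at hn
  rw [← hn]
  have hsplit : ∀ i ∈ Finset.range n, F i =
      (if h : i < n then q n P x₀ ⟨i, h⟩ x y else 1) *
        (marg n P (i + 1) (i + 1) x y / marg n P (i + 1) i x y) := fun i _ => rfl
  rw [Finset.prod_congr rfl hsplit, Finset.prod_mul_distrib]
  congr 1
  rw [← Fin.prod_univ_eq_prod_range (fun i => if h : i < n then q n P x₀ ⟨i, h⟩ x y else 1) n]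
  refine Finset.prod_congr rfl fun i _ => ?_
  rw [dif_pos i.isLt]

end QLemmas

lemma prod_div_telescope (f : ℕ → ℝ) (n : ℕ) (hf : ∀ i, i ≤ n → f i ≠ 0) :
    ∏ i ∈ Finset.range n, f i / f (i + 1) = f 0 / f n := by
  induction n with
  | zero => rw [Finset.prod_range_zero, div_self (hf 0 le_rfl)]
  | succ n ih =>
    rw [Finset.prod_range_succ, ih (fun i hi => hf i (le_trans hi (Nat.le_succ n)))]
    have h1 := hf n (Nat.le_succ n)
    rw [div_mul_div_comm, mul_comm (f 0) (f n), mul_div_mul_left _ _ h1]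

section StepAB

variable (n : ℕ) [Fintype X] [Fintype Y] (P : (Fin n → X) × (Fin n → Y) → ℝ)

lemma marg_pos (hP0 : ∀ p, 0 ≤ P p) {x : Fin n → X} {y : Fin n → Y}
    (hxy : P (x, y) ≠ 0) {a b : ℕ} (ha : a ≤ n) (hb : b ≤ n) :
    0 < marg n P a b x y := by
  have h0 : 0 < P (x, y) := lt_of_le_of_ne (hP0 _) (Ne.symm hxy)
  calc (0:ℝ) < P (x, y) := h0
    _ = marg n P n n x y := (marg_nn n P x y).symm
    _ ≤ marg n P a b x y := marg_anti n P hP0 ha hb x y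

lemma causalY_pos (hP0 : ∀ p, 0 ≤ P p) {x : Fin n → X} {y : Fin n → Y}
    (hxy : P (x, y) ≠ 0) : 0 < causalY n P x y := by
  refine Finset.prod_pos fun i hi => ?_
  have hi' : i < n := Finset.mem_range.mp hi
  exact div_pos (marg_pos n P hP0 hxy hi' hi') (marg_pos n P hP0 hxy hi' hi'.le)

lemma causalY_nonneg (hP0 : ∀ p, 0 ≤ P p) (x : Fin n → X) (y : Fin n → Y) :
    0 ≤ causalY n P x y :=
  Finset.prod_nonneg fun i _ => div_nonneg (marg_nonneg n P hP0 _ _ _ _)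
    (marg_nonneg n P hP0 _ _ _ _)

lemma directedInfo_eq (hP0 : ∀ p, 0 ≤ P p)
    (hP1 : ∑ p : (Fin n → X) × (Fin n → Y), P p = 1) :
    directedInfo n P = ∑ x : Fin n → X, ∑ y : Fin n → Y,
      P (x, y) * Real.logb 2 (causalY n P x y / ∑ x' : Fin n → X, P (x', y)) := by
  unfold directedInfo
  rw [Finset.sum_comm]
  refine Finset.sum_congr rfl fun x _ => ?_
  rw [Finset.sum_comm]
  refine Finset.sum_congr rfl fun y _ => ?_
  by_cases hxy : P (x, y) = 0
  · simp [hxy]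
  · rw [← Finset.mul_sum]
    congr 1
    have hpos : ∀ a b : ℕ, a ≤ n → b ≤ n → 0 < marg n P a b x y :=
      fun a b ha hb => marg_pos n P hP0 hxy ha hb
    have hrpos : ∀ i ∈ Finset.range n,
        0 < (marg n P (i + 1) (i + 1) x y * marg n P 0 i x y) /
          (marg n P (i + 1) i x y * marg n P 0 (i + 1) x y) := by
      intro i hi
      have hi' : i < n := Finset.mem_range.mp hi
      exact div_pos (mul_pos (hpos _ _ hi' hi') (hpos _ _ (Nat.zero_le _) hi'.le))
        (mul_pos (hpos _ _ hi' hi'.le) (hpos _ _ (Nat.zero_le _) hi'))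
    simp only [Real.logb]
    rw [← Finset.sum_div]
    congr 1
    rw [← Real.log_prod (fun i hi => ne_of_gt (hrpos i hi))]
    congr 1
    have hterm : ∀ i ∈ Finset.range n,
        (marg n P (i + 1) (i + 1) x y * marg n P 0 i x y) /
          (marg n P (i + 1) i x y * marg n P 0 (i + 1) x y)
        = (marg n P (i + 1) (i + 1) x y / marg n P (i + 1) i x y) *
            (marg n P 0 i x y / marg n P 0 (i + 1) x y) := by
      intro i hi
      rw [div_mul_div_comm]
    rw [Finset.prod_congr rfl hterm, Finset.prod_mul_distrib]
    have htel : ∏ i ∈ Finset.range n, marg n P 0 i x y / marg n P 0 (i + 1) x y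
        = marg n P 0 0 x y / marg n P 0 n x y :=
      prod_div_telescope (fun i => marg n P 0 i x y) n
        (fun i hi => ne_of_gt (hpos 0 i (Nat.zero_le _) hi))
    rw [htel, marg_00 n P hP1, marg_0n n P]
    have : causalY n P x y = ∏ i ∈ Finset.range n,
        marg n P (i + 1) (i + 1) x y / marg n P (i + 1) i x y := rfl
    rw [← this, one_div, div_eq_mul_inv]

lemma stepB (T : (Fin n → Y) → ℝ) (hP0 : ∀ p, 0 ≤ P p)
    (hP1 : ∑ p : (Fin n → X) × (Fin n → Y), P p = 1)
    (hT0 : ∀ y, 0 ≤ T y) (hT1 : ∑ y : Fin n → Y, T y = 1)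
    (hsupp : ∀ y : Fin n → Y, (∑ x : Fin n → X, P (x, y)) ≠ 0 → T y ≠ 0) :
    (∑ x : Fin n → X, ∑ y : Fin n → Y,
      P (x, y) * Real.logb 2 (causalY n P x y / ∑ x' : Fin n → X, P (x', y)))
    ≤ ∑ x : Fin n → X, ∑ y : Fin n → Y,
        P (x, y) * Real.logb 2 (causalY n P x y / T y) := by
  set PY : (Fin n → Y) → ℝ := fun y => ∑ x' : Fin n → X, P (x', y) with hPY
  have hPY0 : ∀ y, 0 ≤ PY y := fun y => Finset.sum_nonneg fun x' _ => hP0 _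
  have hpt : ∀ (x : Fin n → X) (y : Fin n → Y),
      P (x, y) * Real.logb 2 (causalY n P x y / PY y)
      = P (x, y) * Real.logb 2 (causalY n P x y / T y)
        + P (x, y) * (Real.logb 2 (T y) - Real.logb 2 (PY y)) := by
    intro x y
    by_cases hxy : P (x, y) = 0
    · simp [hxy]
    · have hcY : causalY n P x y ≠ 0 := ne_of_gt (causalY_pos n P hP0 hxy)
      have hPYy : PY y ≠ 0 := by
        intro h0
        refine hxy (le_antisymm ?_ (hP0 _))
        calc P (x, y) ≤ PY y := Finset.single_le_sum (fun x' _ => hP0 (x', y)) (Finset.mem_univ x)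
          _ = 0 := h0
      have hTy : T y ≠ 0 := hsupp y hPYy
      rw [Real.logb_div hcY hPYy, Real.logb_div hcY hTy]
      ring
  simp only [hPY] at hpt ⊢
  rw [Finset.sum_congr rfl fun x _ => Finset.sum_congr rfl fun y _ => hpt x y]
  simp only [Finset.sum_add_distrib]
  have hrest : (∑ x : Fin n → X, ∑ y : Fin n → Y,
      P (x, y) * (Real.logb 2 (T y) - Real.logb 2 (PY y))) ≤ 0 := by
    rw [Finset.sum_comm]
    have hswap : ∀ y : Fin n → Y,
        (∑ x : Fin n → X, P (x, y) * (Real.logb 2 (T y) - Real.logb 2 (PY y)))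
        = PY y * (Real.logb 2 (T y) - Real.logb 2 (PY y)) := by
      intro y
      rw [← Finset.sum_mul]
    rw [Finset.sum_congr rfl fun y _ => hswap y]
    have hb : ∀ y : Fin n → Y,
        PY y * (Real.logb 2 (T y) - Real.logb 2 (PY y)) ≤ (T y - PY y) / Real.log 2 := by
      intro y
      have hlog2 : (0:ℝ) < Real.log 2 := Real.log_pos (by norm_num)
      by_cases h0 : PY y = 0
      · rw [h0]
        simp only [zero_mul, sub_zero]
        exact div_nonneg (hT0 y) hlog2.le
      · have hPYpos : 0 < PY y := lt_of_le_of_ne (hPY0 y) (Ne.symm h0)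
        have hTpos : 0 < T y := lt_of_le_of_ne (hT0 y) (Ne.symm (hsupp y h0))
        have h1 : Real.logb 2 (T y) - Real.logb 2 (PY y) = Real.log (T y / PY y) / Real.log 2 := by
          simp only [Real.logb]
          rw [div_sub_div_same, Real.log_div (ne_of_gt hTpos) h0]
        rw [h1]
        have h2 : Real.log (T y / PY y) ≤ T y / PY y - 1 :=
          Real.log_le_sub_one_of_pos (div_pos hTpos hPYpos)
        calc PY y * (Real.log (T y / PY y) / Real.log 2)
            = PY y * Real.log (T y / PY y) / Real.log 2 := by ring
          _ ≤ PY y * (T y / PY y - 1) / Real.log 2 := by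
              apply div_le_div_of_nonneg_right ?_ hlog2.le
              exact mul_le_mul_of_nonneg_left h2 hPYpos.le
          _ = (T y - PY y) / Real.log 2 := by
              field_simp
    calc (∑ y : Fin n → Y, PY y * (Real.logb 2 (T y) - Real.logb 2 (PY y)))
        ≤ ∑ y : Fin n → Y, (T y - PY y) / Real.log 2 := Finset.sum_le_sum fun y _ => hb y
      _ = ((∑ y : Fin n → Y, T y) - ∑ y : Fin n → Y, PY y) / Real.log 2 := by
          rw [← Finset.sum_div, Finset.sum_sub_distrib]
      _ = 0 := by
          have hPYsum : (∑ y : Fin n → Y, PY y) = 1 := by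
            rw [hPY, ← hP1, Fintype.sum_prod_type, Finset.sum_comm]
          rw [hT1, hPYsum, sub_self, zero_div]
  linarith

end StepAB

section Greedy

variable (n : ℕ) [Fintype X] [Fintype Y] (P : (Fin n → X) × (Fin n → Y) → ℝ)

lemma greedy [Nonempty X] [Nonempty Y] (hP0 : ∀ p, 0 ≤ P p) (x₀ : X)
    (g : (Fin n → X) → (Fin n → Y) → ℝ) :
    ∀ k, k ≤ n → ∃ σ : (Fin n → Y) → Fin n → X, CausalStrategy n σ ∧
      (∑ y : Fin n → Y, ∑ x : Fin n → X, (∏ i : Fin n, q n P x₀ i x y) * g x y)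
      ≤ ∑ y : Fin n → Y, ∑ x : Fin n → X,
          (if ∀ j : Fin n, (j : ℕ) < k → x j = σ y j then (1:ℝ) else 0) *
            ((∏ i ∈ Finset.univ.filter fun i : Fin n => k ≤ (i : ℕ), q n P x₀ i x y) *
              g x y) := by
  intro k
  induction k with
  | zero =>
    intro _
    have hfil : (Finset.univ.filter fun i : Fin n => 0 ≤ (i : ℕ)) = Finset.univ :=
      Finset.filter_true_of_mem (fun i _ => Nat.zero_le _)
    refine ⟨fun _ _ => x₀, fun _ _ _ _ => rfl, le_of_eq ?_⟩
    simp only [hfil, Nat.not_lt_zero, false_implies, implies_true, if_true, one_mul]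
  | succ k ih =>
    intro hk1
    obtain ⟨σ, hσ, hIH⟩ := ih (le_trans (Nat.le_succ k) hk1)
    have hkn : k < n := hk1
    set kf : Fin n := ⟨k, hkn⟩ with hkf
    set ρ : (Fin n → Y) → X → ℝ :=
      fun y a => q n P x₀ kf (Function.update (σ y) kf a) y with hρ
    set R : (Fin n → X) → (Fin n → Y) → ℝ := fun x y =>
      (∏ i ∈ Finset.univ.filter fun i : Fin n => k + 1 ≤ (i : ℕ), q n P x₀ i x y) * g x y
      with hR
    set G : (Fin n → Y) → X → ℝ := fun y a => ∑ x : Fin n → X,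
      (if (∀ j : Fin n, (j : ℕ) < k → x j = σ y j) ∧ x kf = a then (1:ℝ) else 0) * R x y
      with hG
    have y₀ : Y := Classical.arbitrary Y
    set cls : (Fin n → Y) → (Fin n → Y) :=
      fun y j => if (j : ℕ) < k then y j else y₀ with hcls
    set Γ : (Fin n → Y) → X → ℝ :=
      fun c a => ∑ y ∈ Finset.univ.filter fun y' => cls y' = c, G y a with hΓ
    set astar : (Fin n → Y) → X :=
      fun y => Classical.epsilon fun a => ∀ b, Γ (cls y) b ≤ Γ (cls y) a with hastar
    set σ' : (Fin n → Y) → Fin n → X :=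
      fun y j => if (j : ℕ) = k then astar y else σ y j with hσ'
    -- basic facts
    have hcls_congr : ∀ y y' : Fin n → Y, (∀ j : Fin n, (j : ℕ) < k → y j = y' j) →
        cls y = cls y' := by
      intro y y' h
      funext j
      simp only [hcls]
      split_ifs with hj
      · exact h j hj
      · rfl
    have hcls_mem : ∀ y : Fin n → Y, ∀ j : Fin n, (j : ℕ) < k → cls y j = y j := by
      intro y j hj
      simp only [hcls]
      rw [if_pos hj]
    have hσpre : ∀ y y' : Fin n → Y, (∀ j : Fin n, (j : ℕ) < k → y j = y' j) →
        ∀ i : Fin n, (i : ℕ) ≤ k → σ y i = σ y' i := by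
      intro y y' h i hi
      exact hσ y y' i (fun j hj => h j (lt_of_lt_of_le (Fin.lt_def.mp hj) hi))
    have hρ_congr : ∀ y y' : Fin n → Y, (∀ j : Fin n, (j : ℕ) < k → y j = y' j) →
        ∀ a : X, ρ y a = ρ y' a := by
      intro y y' h a
      refine q_congr n P x₀ (fun j hj => ?_) (fun j hj => h j hj)
      rcases Nat.lt_succ_iff_lt_or_eq.mp hj with hj' | hj'
      · have hne : j ≠ kf := fun he => absurd hj' (by rw [he]; exact lt_irrefl _)
        rw [Function.update_of_ne hne, Function.update_of_ne hne]
        exact hσpre y y' h j (le_of_lt hj')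
      · have hje : j = kf := Fin.ext hj'
        subst hje
        rw [Function.update_self, Function.update_self]
    have hρ_sum : ∀ y : Fin n → Y, ∑ a : X, ρ y a = 1 := fun y => q_sum n P x₀ kf (σ y) y
    have hρ_nonneg : ∀ (y : Fin n → Y) (a : X), 0 ≤ ρ y a :=
      fun y a => q_nonneg n P x₀ hP0 kf _ y
    have hknotmem : kf ∉ Finset.univ.filter fun i : Fin n => k + 1 ≤ (i : ℕ) := by
      simp [hkf]
    have hfilter : (Finset.univ.filter fun i : Fin n => k ≤ (i : ℕ))
        = insert kf (Finset.univ.filter fun i : Fin n => k + 1 ≤ (i : ℕ)) := by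
      ext i
      simp only [Finset.mem_filter, Finset.mem_insert, Finset.mem_univ, true_and]
      constructor
      · intro hi
        rcases Nat.eq_or_lt_of_le hi with hi' | hi'
        · left; exact Fin.ext hi'.symm
        · right; exact hi'
      · rintro (rfl | hi)
        · exact le_rfl
        · exact le_of_lt hi
    -- E1
    have E1 : ∀ y : Fin n → Y,
        (∑ x : Fin n → X,
          (if ∀ j : Fin n, (j : ℕ) < k → x j = σ y j then (1:ℝ) else 0) *
            ((∏ i ∈ Finset.univ.filter fun i : Fin n => k ≤ (i : ℕ), q n P x₀ i x y) * g x y))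
        = ∑ a : X, ρ y a * G y a := by
      intro y
      have key : ∀ x : Fin n → X,
          (if ∀ j : Fin n, (j : ℕ) < k → x j = σ y j then (1:ℝ) else 0) *
            ((∏ i ∈ Finset.univ.filter fun i : Fin n => k ≤ (i : ℕ), q n P x₀ i x y) * g x y)
          = ∑ a : X, ρ y a *
              ((if (∀ j : Fin n, (j : ℕ) < k → x j = σ y j) ∧ x kf = a then (1:ℝ) else 0) *
                R x y) := by
        intro x
        by_cases hC : ∀ j : Fin n, (j : ℕ) < k → x j = σ y j
        · rw [if_pos hC, one_mul]
          rw [Finset.sum_eq_single (x kf)]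
          · rw [if_pos ⟨hC, rfl⟩, one_mul]
            have hq : (∏ i ∈ Finset.univ.filter fun i : Fin n => k ≤ (i : ℕ), q n P x₀ i x y)
                = q n P x₀ kf x y *
                  ∏ i ∈ Finset.univ.filter fun i : Fin n => k + 1 ≤ (i : ℕ), q n P x₀ i x y := by
              rw [hfilter, Finset.prod_insert hknotmem]
            have hqρ : q n P x₀ kf x y = ρ y (x kf) := by
              refine q_congr n P x₀ (fun j hj => ?_) (fun j _ => rfl)
              rcases Nat.lt_succ_iff_lt_or_eq.mp hj with hj' | hj'
              · have hne : j ≠ kf := fun he => absurd hj' (by rw [he]; exact lt_irrefl _)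
                rw [Function.update_of_ne hne]
                exact hC j hj'
              · have hje : j = kf := Fin.ext hj'
                subst hje
                rw [Function.update_self]
            rw [hq, hqρ, hR]
            ring
          · intro a _ ha
            rw [if_neg (fun hcon => ha hcon.2.symm)]
            ring!
          · intro hnot
            exact absurd (Finset.mem_univ (x kf)) hnot
        · rw [if_neg hC, zero_mul]
          rw [Finset.sum_eq_zero]
          intro a _
          rw [if_neg (fun hcon => hC hcon.1)]
          ring
      rw [Finset.sum_congr rfl fun x _ => key x, Finset.sum_comm]
      refine Finset.sum_congr rfl fun a _ => ?_
      rw [hG, Finset.mul_sum]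
    -- per-fiber inequality
    have E34 : ∀ c : Fin n → Y,
        (∑ y ∈ Finset.univ.filter fun y' => cls y' = c, ∑ a : X, ρ y a * G y a)
        ≤ ∑ y ∈ Finset.univ.filter fun y' => cls y' = c, G y (astar y) := by
      intro c
      have hfib : ∀ y ∈ Finset.univ.filter fun y' => cls y' = c, cls y = c :=
        fun y hy => (Finset.mem_filter.mp hy).2
      have hagree : ∀ y ∈ Finset.univ.filter fun y' => cls y' = c,
          ∀ j : Fin n, (j : ℕ) < k → y j = c j := by
        intro y hy j hj
        rw [← hfib y hy]
        exact (hcls_mem y j hj).symm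
      have hρc : ∀ y ∈ Finset.univ.filter fun y' => cls y' = c, ∀ a : X, ρ y a = ρ c a :=
        fun y hy a => hρ_congr y c (hagree y hy) a
      have hA : ∃ a : X, ∀ b : X, Γ c b ≤ Γ c a := by
        obtain ⟨a, _, ha⟩ := Finset.exists_max_image Finset.univ (Γ c) Finset.univ_nonempty
        exact ⟨a, fun b => ha b (Finset.mem_univ b)⟩
      have hAspec : ∀ b : X, Γ c b ≤ Γ c (Classical.epsilon fun a => ∀ b, Γ c b ≤ Γ c a) :=
        Classical.epsilon_spec hA
      have hastar_c : ∀ y ∈ Finset.univ.filter fun y' => cls y' = c,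
          astar y = Classical.epsilon fun a => ∀ b, Γ c b ≤ Γ c a := by
        intro y hy
        rw [hastar]
        simp only
        rw [hfib y hy]
      calc (∑ y ∈ Finset.univ.filter fun y' => cls y' = c, ∑ a : X, ρ y a * G y a)
          = ∑ a : X, ρ c a * Γ c a := by
            rw [Finset.sum_comm]
            refine Finset.sum_congr rfl fun a _ => ?_
            rw [hΓ]
            simp only
            rw [Finset.mul_sum]
            refine Finset.sum_congr rfl fun y hy => ?_
            rw [hρc y hy a]
        _ ≤ ∑ a : X, ρ c a * Γ c (Classical.epsilon fun a => ∀ b, Γ c b ≤ Γ c a) :=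
            Finset.sum_le_sum fun a _ =>
              mul_le_mul_of_nonneg_left (hAspec a) (hρ_nonneg c a)
        _ = Γ c (Classical.epsilon fun a => ∀ b, Γ c b ≤ Γ c a) := by
            rw [← Finset.sum_mul, hρ_sum c, one_mul]
        _ = ∑ y ∈ Finset.univ.filter fun y' => cls y' = c,
              G y (Classical.epsilon fun a => ∀ b, Γ c b ≤ Γ c a) := rfl
        _ = ∑ y ∈ Finset.univ.filter fun y' => cls y' = c, G y (astar y) :=
            Finset.sum_congr rfl fun y hy => by rw [hastar_c y hy]
    -- causality of σ'
    have hσ'causal : CausalStrategy n σ' := by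
      intro y y' i hagree
      simp only [hσ']
      by_cases hik : (i : ℕ) = k
      · rw [if_pos hik, if_pos hik]
        have hcc : cls y = cls y' :=
          hcls_congr y y' (fun j hj => hagree j (Fin.lt_def.mpr (by rw [hik]; exact hj)))
        rw [hastar]
        simp only
        rw [hcc]
      · rw [if_neg hik, if_neg hik]
        exact hσ y y' i hagree
    -- E6
    have E6 : (∑ y : Fin n → Y, G y (astar y))
        = ∑ y : Fin n → Y, ∑ x : Fin n → X,
            (if ∀ j : Fin n, (j : ℕ) < k + 1 → x j = σ' y j then (1:ℝ) else 0) *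
              ((∏ i ∈ Finset.univ.filter fun i : Fin n => k + 1 ≤ (i : ℕ), q n P x₀ i x y) *
                g x y) := by
      refine Finset.sum_congr rfl fun y _ => ?_
      rw [hG]
      simp only
      refine Finset.sum_congr rfl fun x _ => ?_
      have hiff : ((∀ j : Fin n, (j : ℕ) < k → x j = σ y j) ∧ x kf = astar y)
          ↔ (∀ j : Fin n, (j : ℕ) < k + 1 → x j = σ' y j) := by
        constructor
        · rintro ⟨h1, h2⟩ j hj
          rcases Nat.lt_succ_iff_lt_or_eq.mp hj with hj' | hj'
          · simp only [hσ']
            rw [if_neg (fun he => absurd hj' (by rw [he]; exact lt_irrefl _))]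
            exact h1 j hj'
          · have hje : j = kf := Fin.ext hj'
            subst hje
            simp only [hσ', if_true]
            simpa [hkf] using h2
        · intro h
          constructor
          · intro j hj
            have := h j (Nat.lt_succ_of_lt hj)
            simp only [hσ'] at this
            rwa [if_neg (fun he => absurd hj (by rw [he]; exact lt_irrefl _))] at this
          · have := h kf (Nat.lt_succ_self k)
            simp only [hσ', if_true] at this
            simpa [hkf] using this
      rw [if_congr hiff rfl rfl, hR]
    -- assembly
    refine ⟨σ', hσ'causal, le_trans hIH ?_⟩
    calc (∑ y : Fin n → Y, ∑ x : Fin n → X,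
          (if ∀ j : Fin n, (j : ℕ) < k → x j = σ y j then (1:ℝ) else 0) *
            ((∏ i ∈ Finset.univ.filter fun i : Fin n => k ≤ (i : ℕ), q n P x₀ i x y) * g x y))
        = ∑ y : Fin n → Y, ∑ a : X, ρ y a * G y a :=
          Finset.sum_congr rfl fun y _ => E1 y
      _ = ∑ c : Fin n → Y, ∑ y ∈ Finset.univ.filter fun y' => cls y' = c,
            ∑ a : X, ρ y a * G y a :=
          (Finset.sum_fiberwise Finset.univ cls _).symm
      _ ≤ ∑ c : Fin n → Y, ∑ y ∈ Finset.univ.filter fun y' => cls y' = c, G y (astar y) :=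
          Finset.sum_le_sum fun c _ => E34 c
      _ = ∑ y : Fin n → Y, G y (astar y) :=
          Finset.sum_fiberwise Finset.univ cls _
      _ = _ := E6

end Greedy


/-- `I(X^n → Y^n)` is at most the maximum, over deterministic causal feedback
strategies, of `D(P_{Y^n‖X^n=x^n} ‖ T_{Y^n})`: some causal strategy attains an upper bound. -/
theorem directedInfo_le_max_strategy_divergence (n : ℕ) [Fintype X] [Fintype Y]
    (P : (Fin n → X) × (Fin n → Y) → ℝ) (T : (Fin n → Y) → ℝ)
    (hP0 : ∀ p, 0 ≤ P p) (hP1 : ∑ p : (Fin n → X) × (Fin n → Y), P p = 1)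
    (hT0 : ∀ y, 0 ≤ T y) (hT1 : ∑ y : Fin n → Y, T y = 1)
    (hsupp : ∀ y : Fin n → Y, (∑ x : Fin n → X, P (x, y)) ≠ 0 → T y ≠ 0) :
    ∃ σ : (Fin n → Y) → Fin n → X, CausalStrategy n σ ∧
      directedInfo n P ≤
        ∑ y : Fin n → Y,
          causalY n P (σ y) y * Real.logb 2 (causalY n P (σ y) y / T y) := by
  rcases Nat.eq_zero_or_pos n with hn | hn
  · subst hn
    refine ⟨fun _ => Fin.elim0, fun y y' i _ => i.elim0, ?_⟩
    have h1 : directedInfo 0 P = 0 := by simp [directedInfo]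
    have h2 : T (default : Fin 0 → Y) = 1 := (Fintype.sum_unique T).symm.trans hT1
    have h3 : (∑ y : Fin 0 → Y,
        causalY 0 P ((fun _ => Fin.elim0) y) y *
          Real.logb 2 (causalY 0 P ((fun _ => Fin.elim0) y) y / T y)) = 0 := by
      refine Finset.sum_eq_zero fun y _ => ?_
      have hTy : T y = 1 := by rw [Subsingleton.elim y default]; exact h2
      simp [causalY, hTy]
    rw [h1, h3]
  · by_cases hX : Nonempty X
    · by_cases hY : Nonempty Y
      · haveI := hX
        haveI := hY
        set x₀ : X := Classical.arbitrary X
        set g : (Fin n → X) → (Fin n → Y) → ℝ :=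
          fun x y => causalY n P x y * Real.logb 2 (causalY n P x y / T y) with hg
        obtain ⟨σ, hc, hle⟩ := greedy n P hP0 x₀ g n le_rfl
        refine ⟨σ, hc, ?_⟩
        have hC : (∑ x : Fin n → X, ∑ y : Fin n → Y,
            P (x, y) * Real.logb 2 (causalY n P x y / T y))
            = ∑ y : Fin n → Y, ∑ x : Fin n → X, (∏ i : Fin n, q n P x₀ i x y) * g x y := by
          rw [Finset.sum_comm]
          refine Finset.sum_congr rfl fun y _ => Finset.sum_congr rfl fun x _ => ?_
          rw [hg, ← prod_q_mul_causalY n P x₀ hP0 hP1 x y]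
          ring
        have hD : (∑ y : Fin n → Y, ∑ x : Fin n → X,
            (if ∀ j : Fin n, (j : ℕ) < n → x j = σ y j then (1:ℝ) else 0) *
              ((∏ i ∈ Finset.univ.filter fun i : Fin n => n ≤ (i : ℕ), q n P x₀ i x y) *
                g x y))
            = ∑ y : Fin n → Y,
                causalY n P (σ y) y * Real.logb 2 (causalY n P (σ y) y / T y) := by
          refine Finset.sum_congr rfl fun y _ => ?_
          have hfil : (Finset.univ.filter fun i : Fin n => n ≤ (i : ℕ)) = ∅ :=
            Finset.filter_false_of_mem (fun i _ => not_le.mpr i.isLt)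
          have hterm : ∀ x : Fin n → X,
              (if ∀ j : Fin n, (j : ℕ) < n → x j = σ y j then (1:ℝ) else 0) *
                ((∏ i ∈ Finset.univ.filter fun i : Fin n => n ≤ (i : ℕ), q n P x₀ i x y) *
                  g x y)
              = (if x = σ y then (1:ℝ) else 0) * g x y := by
            intro x
            rw [hfil, Finset.prod_empty, one_mul]
            congr 1
            refine if_congr ?_ rfl rfl
            constructor
            · intro h; exact funext fun j => h j j.isLt
            · intro h j _; rw [h]
          rw [Finset.sum_congr rfl fun x _ => hterm x]
          rw [Finset.sum_eq_single (σ y)]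
          · rw [if_pos rfl, one_mul, hg]
          · intro x _ hx
            rw [if_neg hx, zero_mul]
          · intro hnot
            exact absurd (Finset.mem_univ (σ y)) hnot
        calc directedInfo n P
            = ∑ x : Fin n → X, ∑ y : Fin n → Y,
                P (x, y) * Real.logb 2 (causalY n P x y / ∑ x' : Fin n → X, P (x', y)) :=
              directedInfo_eq n P hP0 hP1
          _ ≤ ∑ x : Fin n → X, ∑ y : Fin n → Y,
                P (x, y) * Real.logb 2 (causalY n P x y / T y) :=
              stepB n P T hP0 hP1 hT0 hT1 hsupp
          _ = ∑ y : Fin n → Y, ∑ x : Fin n → X, (∏ i : Fin n, q n P x₀ i x y) * g x y := hC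
          _ ≤ _ := hle
          _ = _ := hD
      · have hYe : IsEmpty Y := not_nonempty_iff.mp hY
        have hempty : IsEmpty (Fin n → Y) := ⟨fun y => hYe.false (y ⟨0, hn⟩)⟩
        haveI := hempty
        refine ⟨fun y => (hempty.false y).elim, fun y _ _ _ => (hempty.false y).elim, ?_⟩
        have h1 : directedInfo n P = 0 := by
          unfold directedInfo
          refine Finset.sum_eq_zero fun i _ => Finset.sum_eq_zero fun x _ => ?_
          simp
        rw [h1]
        simp
    · exfalso
      have hXe : IsEmpty X := not_nonempty_iff.mp hX
      haveI : IsEmpty ((Fin n → X) × (Fin n → Y)) :=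
        ⟨fun p => hXe.false (p.1 ⟨0, hn⟩)⟩
      simp at hP1


end Stmt2
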